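/- Let X be a finiteness space. The ltvs K⟨X⟩ is locally linearly bounded (has a linearly bounded open linear subspace) if and only if there exist u ∈ F(X) and u' ∈ F(X)^⊥ with u ∪ u' = |X|. -/

import Mathlib

/-- The orthogonal of a collection of subsets of `I`. -/
def orth {I : Type*} (F : Set (Set I)) : Set (Set I) :=
  {u' | ∀ u ∈ F, (u ∩ u').Finite}

/-- The support of a family of scalars. -/
def Supp {I K : Type*} [Zero K] (x : I → K) : Set I := {a | x a ≠ 0}

/-- The underlying set of `K⟨X⟩` inside the full function space. -/
def Ksp {I : Type*} (K : Type*) [Zero K] (F : Set (Set I)) : Set (I → K) :=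
  {x | Supp x ∈ F}

/-- A linear subspace of `K⟨X⟩` is open iff it contains a basic subspace
`V(u') = {x : supp x ∩ u' = ∅}` for some `u' ∈ F^⊥`. -/
def IsOpenSub {I K : Type*} [Field K] (F : Set (Set I))
    (U : Submodule K (I → K)) : Prop :=
  ∃ u' ∈ orth F, ∀ x : I → K, Supp x ∈ F → (∀ a ∈ u', x a = 0) → x ∈ U

/-- A linear subspace `B` of `K⟨X⟩` is linearly bounded if for every open
linear subspace `U` of `K⟨X⟩` there is a finite-dimensional subspace `A` of
`K⟨X⟩` with `B ⊆ U + A`. -/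
def LinBoundedIn {I K : Type*} [Field K] (F : Set (Set I))
    (B : Submodule K (I → K)) : Prop :=
  ∀ U : Submodule K (I → K), (U : Set (I → K)) ⊆ Ksp K F → IsOpenSub F U →
    ∃ A : Submodule K (I → K), (A : Set (I → K)) ⊆ Ksp K F ∧
      FiniteDimensional K A ∧ B ≤ U ⊔ A

section aux
variable {I : Type*} {K : Type*} [Field K] {F : Set (Set I)}

lemma aux_mem_of_subset (hF : orth (orth F) = F) {u v : Set I}
    (hu : u ∈ F) (hvu : v ⊆ u) : v ∈ F := by
  rw [← hF]; intro w hw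
  exact ((hw u hu).subset (by rw [Set.inter_comm]; exact Set.inter_subset_inter_left _ hvu))

lemma aux_finite_mem (hF : orth (orth F) = F) {v : Set I} (hv : v.Finite) : v ∈ F := by
  rw [← hF]; intro w hw
  exact hv.subset Set.inter_subset_right

lemma aux_union_mem (hF : orth (orth F) = F) {u v : Set I}
    (hu : u ∈ F) (hv : v ∈ F) : u ∪ v ∈ F := by
  rw [← hF]; intro w hw
  rw [Set.inter_union_distrib_left, Set.inter_comm w u, Set.inter_comm w v]
  exact (hw u hu).union (hw v hv)

lemma supp_add_subset (x y : I → K) : Supp (x + y) ⊆ Supp x ∪ Supp y := by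
  intro a ha
  by_contra h
  simp only [Supp, Set.mem_union, Set.mem_setOf_eq, not_or, not_not] at h ha
  exact ha (by simp [Pi.add_apply, h.1, h.2])

lemma supp_smul_subset (c : K) (x : I → K) : Supp (c • x) ⊆ Supp x := by
  intro a ha
  simp only [Supp, Set.mem_setOf_eq, Pi.smul_apply, smul_eq_mul] at ha ⊢
  exact fun h => ha (by simp [h])

/-- The subspace of x with Supp x ∈ F vanishing on s. -/
def VF (K : Type*) [Field K] (F : Set (Set I)) (hF : orth (orth F) = F) (s : Set I) :
    Submodule K (I → K) where
  carrier := {x | Supp x ∈ F ∧ ∀ a ∈ s, x a = 0}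
  zero_mem' := ⟨by simpa [Supp] using aux_finite_mem hF Set.finite_empty, by simp⟩
  add_mem' := by
    rintro x y ⟨hx1, hx2⟩ ⟨hy1, hy2⟩
    exact ⟨aux_mem_of_subset hF (aux_union_mem hF hx1 hy1) (supp_add_subset x y),
      fun a ha => by simp [hx2 a ha, hy2 a ha]⟩
  smul_mem' := by
    rintro c x ⟨hx1, hx2⟩
    exact ⟨aux_mem_of_subset hF hx1 (supp_smul_subset c x),
      fun a ha => by simp [hx2 a ha]⟩

/-- The subspace of x supported in s. -/
def Bsub (K : Type*) [Field K] (s : Set I) : Submodule K (I → K) where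
  carrier := {x | Supp x ⊆ s}
  zero_mem' := by simp [Supp]
  add_mem' := fun hx hy => (supp_add_subset _ _).trans (Set.union_subset hx hy)
  smul_mem' := fun c x hx => (supp_smul_subset c x).trans hx

lemma Bsub_findim {s : Set I} (hs : s.Finite) : FiniteDimensional K (Bsub K s) := by
  haveI := hs.to_subtype
  haveI : FiniteDimensional K (s → K) := inferInstance
  apply FiniteDimensional.of_injective
    ((LinearMap.funLeft K K (Subtype.val : s → I)).comp (Bsub K s).subtype)
  intro x y hxy
  apply Subtype.ext
  funext a
  by_cases ha : a ∈ s
  · exact congrFun hxy ⟨a, ha⟩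
  · have hx : (x : I → K) a = 0 := by
      by_contra h; exact ha (x.2 h)
    have hy : (y : I → K) a = 0 := by
      by_contra h; exact ha (y.2 h)
    rw [hx, hy]

end aux

/-- `K⟨X⟩` is locally linearly bounded (it has an open linear subspace which is
linearly bounded) iff there are `u ∈ F` and `u' ∈ F^⊥` with `u ∪ u' = |X|`. -/
theorem locally_linearly_bounded_iff {I : Type*} (K : Type*) [Field K]
    (F : Set (Set I)) (hF : orth (orth F) = F) :
    (∃ U : Submodule K (I → K), (U : Set (I → K)) ⊆ Ksp K F ∧
        IsOpenSub F U ∧ LinBoundedIn F U) ↔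
      ∃ u ∈ F, ∃ u' ∈ orth F, u ∪ u' = Set.univ := by
  classical
  constructor
  · rintro ⟨U, hUK, ⟨u', hu', hopen⟩, hbd⟩
    refine ⟨u'ᶜ, ?_, u', hu', by simp⟩
    rw [← hF]; intro w hw
    by_contra hinf
    have hTinf : (w ∩ u'ᶜ).Infinite := hinf
    set T : Set I := w ∩ u'ᶜ with hT
    obtain ⟨A, hAK, hAfin, hle⟩ := hbd (VF K F hF w) (fun x hx => hx.1)
      ⟨w, hw, fun x hx hv => ⟨hx, hv⟩⟩
    set π := LinearMap.funLeft K K (Subtype.val : T → I) with hπ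
    set P := A.map π with hP
    haveI : FiniteDimensional K A := hAfin
    haveI : Module.Finite K P := Module.Finite.map A π
    have hmem : ∀ j : T, (Pi.single (j : I) (1:K) : I → K) ∈ U := by
      intro j
      apply hopen
      · apply aux_finite_mem hF
        apply Set.Finite.subset (Set.finite_singleton (j : I))
        intro a ha
        simp only [Supp, Set.mem_setOf_eq, Pi.single_apply] at ha
        by_contra h
        simp only [Set.mem_singleton_iff] at h
        exact ha (by rw [if_neg h])
      · intro a ha
        have : a ≠ (j : I) := by
          intro h; exact j.2.2 (h ▸ ha)
        rw [Pi.single_apply, if_neg this]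
    have hsingle : ∀ j : T, π (Pi.single (j : I) (1:K)) = Pi.single j (1:K) := by
      intro j
      funext b
      simp only [hπ, LinearMap.funLeft_apply, Pi.single_apply]
      by_cases h : b = j
      · rw [if_pos h, if_pos (by rw [h])]
      · rw [if_neg h, if_neg (fun hh => h (Subtype.ext hh))]
    have hdec : ∀ j : T, (Pi.single j (1:K) : T → K) ∈ P := by
      intro j
      obtain ⟨y, hy, z, hz, hyz⟩ := Submodule.mem_sup.mp (hle (hmem j))
      have hy0 : π y = 0 := funext fun b => hy.2 b.1 b.2.1
      refine ⟨z, hz, ?_⟩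
      have := congrArg π hyz
      rw [map_add, hy0, zero_add] at this
      rw [this, hsingle]
    haveI := hTinf.to_subtype
    have hli : LinearIndependent K (fun j : T => (Pi.single j (1:K) : T → K)) := by
      rw [linearIndependent_iff']
      intro s g hsum i hi
      have := congrFun hsum i
      simpa [Finset.sum_apply, Pi.single_apply, Finset.sum_ite_eq', hi] using this
    have hli' : LinearIndependent K (fun j : T => (⟨Pi.single j (1:K), hdec j⟩ : P)) :=
      hli.of_comp P.subtype
    exact Module.Finite.not_linearIndependent_of_infinite _ hli'
  · rintro ⟨u, hu, u', hu', huu⟩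
    refine ⟨VF K F hF u', fun x hx => hx.1, ⟨u', hu', fun x hx hv => ⟨hx, hv⟩⟩, ?_⟩
    rintro V hVK ⟨v', hv', hVopen⟩
    have hsfin : (u ∩ v').Finite := hv' u hu
    refine ⟨Bsub K (u ∩ v'), ?_, Bsub_findim hsfin, ?_⟩
    · intro x hx
      exact aux_finite_mem hF (hsfin.subset hx)
    · intro x hx
      set y : I → K := fun a => if a ∈ v' then 0 else x a with hy
      set z : I → K := fun a => if a ∈ v' then x a else 0 with hz
      have hxyz : x = y + z := by
        funext a
        by_cases h : a ∈ v' <;> simp [hy, hz, h]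
      have hyV : y ∈ V := by
        apply hVopen
        · apply aux_mem_of_subset hF hx.1
          intro a ha
          simp only [Supp, Set.mem_setOf_eq, hy] at ha ⊢
          by_cases h : a ∈ v'
          · exact absurd (if_pos h) ha
          · rwa [if_neg h] at ha
        · intro a ha; simp [hy, ha]
      have hzA : z ∈ Bsub K (u ∩ v') := by
        intro a ha
        simp only [Supp, Set.mem_setOf_eq, hz] at ha
        by_cases h : a ∈ v'
        · refine ⟨?_, h⟩
          have hxa : x a ≠ 0 := by rwa [if_pos h] at ha
          have : a ∉ u' := fun hau' => hxa (hx.2 a hau')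
          have := huu ▸ Set.mem_univ a
          rcases (Set.mem_union a u u').mp (huu ▸ Set.mem_univ a) with h1 | h2
          · exact h1
          · exact absurd h2 ‹a ∉ u'›
        · exact absurd (if_neg h) ha
      rw [hxyz]
      exact Submodule.add_mem_sup hyV hzA
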